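/- (Ohira–Pearle example saturates the trade-off.) Let ℏ > 0, let {e_1, e_{-1}} be an orthonormal basis of ℂ², and let S_z := (ℏ/2)(|e_1⟩⟨e_1| − |e_{-1}⟩⟨e_{-1}|). Let α, β ∈ ℂ with |α|² + |β|² = 1, α ≠ 0, β ≠ 0, and set ψ1 := α e_1 + β e_{-1}, ψ0 := conj(β) e_1 − conj(α) e_{-1}, ψ1' := α e_1 + β e_{-1}, ψ0' := conj(β) e_1 + conj(α) e_{-1}. Then: (i) ⟨ψ0, S_z ψ1⟩ = ℏ α β; (ii) the fidelity of the pure states |ψ0'⟩⟨ψ0'| and |ψ1'⟩⟨ψ1'| equals 2|αβ|; (iii) the fidelity of the orthogonal pure apparatus states (e_1 + e_{-1})/√2 and (e_1 − e_{-1})/√2 is 0; and hence |⟨ψ0, S_z ψ1⟩| = ‖S_z‖ · F(|ψ0'⟩⟨ψ0'|, |ψ1'⟩⟨ψ1'|), where ‖S_z‖ = ℏ/2 is the operator norm, i.e., equality holds in the distinguishability trade-off inequality with vanishing apparatus-side fidelity. -/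

import Mathlib

open Matrix Kronecker
open scoped ComplexOrder

-- Positive semidefinite square root (zero if not PSD).
open Classical in
noncomputable def psqrt {n : Type*} [Fintype n] [DecidableEq n] (A : Matrix n n ℂ) :
    Matrix n n ℂ :=
  if h : A.PosSemidef then
    (h.1.eigenvectorUnitary : Matrix n n ℂ) * diagonal ((↑) ∘ Real.sqrt ∘ h.1.eigenvalues) *
      (star h.1.eigenvectorUnitary : Matrix n n ℂ) else 0

/-- Fidelity F(ρ0,ρ1) = tr √(√ρ0 ρ1 √ρ0). -/
noncomputable def fidelity {n : Type*} [Fintype n] [DecidableEq n] (ρ0 ρ1 : Matrix n n ℂ) : ℝ :=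
  (psqrt (psqrt ρ0 * ρ1 * psqrt ρ0)).trace.re

/-- Operator (ℓ²→ℓ²) norm of a matrix. -/
noncomputable def opNorm {n : Type*} [Fintype n] [DecidableEq n] (A : Matrix n n ℂ) : ℝ :=
  ‖LinearMap.toContinuousLinearMap (Matrix.toEuclideanLin A)‖

/-- Partial trace over the right (second) factor. -/
noncomputable def ptraceRight {m n : Type*} [Fintype m] [Fintype n]
    (ρ : Matrix (m × n) (m × n) ℂ) : Matrix m m ℂ :=
  Matrix.of fun i j => ∑ k, ρ (i, k) (j, k)

/-- Partial trace over the left (first) factor. -/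
noncomputable def ptraceLeft {m n : Type*} [Fintype m] [Fintype n]
    (ρ : Matrix (m × n) (m × n) ℂ) : Matrix n n ℂ :=
  Matrix.of fun i j => ∑ k, ρ (k, i) (k, j)

/-! The projections `P₁`, `P₋₁` onto `e₁`, `e₋₁` are orthogonal star projections, so
`S_z = (ℏ/2)(P₁ - P₋₁)` is self-adjoint with square `(ℏ/2)²(P₁ + P₋₁)`, a nonzero projection;
the C⋆-identity then gives `‖S_z‖ = ℏ/2`. For a unit vector `φ`, uniqueness of positive square
roots gives `√(|φ⟩⟨φ|) = |φ⟩⟨φ|` and `√(|φ⟩⟨φ|χ⟩⟨χ|φ⟩⟨φ|) = |⟨φ,χ⟩| |φ⟩⟨φ|`, so the pure-state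
fidelity is `|⟨φ,χ⟩|`. The rest is arithmetic of coordinates in the basis `e₁, e₋₁`. -/

section CStar

variable {E : Type*} [NonUnitalNormedRing E] [StarRing E] [CStarRing E]

theorem IsStarProjection.norm_eq_one {p : E} (hp : IsStarProjection p) (hp0 : p ≠ 0) :
    ‖p‖ = 1 := by
  have h : ‖p‖ * ‖p‖ = ‖p‖ := by
    rw [← CStarRing.norm_star_mul_self, hp.isSelfAdjoint.star_eq, hp.isIdempotentElem.eq]
  exact (mul_eq_right₀ (norm_ne_zero_iff.mpr hp0)).mp h

theorem IsSelfAdjoint.norm_eq_one_of_isStarProjection_mul_self {u : E} (hu : IsSelfAdjoint u)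
    (hp : IsStarProjection (u * u)) (hp0 : u * u ≠ 0) : ‖u‖ = 1 := by
  have h := hu.norm_mul_self
  rw [hp.norm_eq_one hp0] at h
  nlinarith [norm_nonneg u]

end CStar

section PSqrt

open scoped MatrixOrder

variable {n : Type*} [Fintype n] [DecidableEq n]

theorem psqrt_eq_cfcSqrt {A : Matrix n n ℂ} (hA : A.PosSemidef) : psqrt A = CFC.sqrt A := by
  rw [psqrt, dif_pos hA, CFC.sqrt_eq_real_sqrt A hA.nonneg, cfcₙ_eq_cfc, hA.1.cfc_eq]
  simp [IsHermitian.cfc, Unitary.conjStarAlgAut_apply]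

theorem psqrt_eq_of_mul_self {A B : Matrix n n ℂ} (hB : B.PosSemidef) (h : B * B = A) :
    psqrt A = B := by
  have hA : A.PosSemidef := by
    simpa only [← h, hB.1.eq] using posSemidef_conjTranspose_mul_self B
  rw [psqrt_eq_cfcSqrt hA]
  exact CFC.sqrt_unique h hB.nonneg

end PSqrt

section PureStates

variable {n : Type*} [Fintype n]

theorem isStarProjection_vecMulVec_star {φ : n → ℂ} (hφ : star φ ⬝ᵥ φ = 1) :
    IsStarProjection (vecMulVec φ (star φ)) where
  isIdempotentElem := by
    rw [IsIdempotentElem, vecMulVec_mul_vecMulVec, hφ, one_smul]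
  isSelfAdjoint := by
    rw [IsSelfAdjoint, star_eq_conjTranspose, conjTranspose_vecMulVec, star_star]

theorem vecMulVec_star_mul_mul_self (φ χ : n → ℂ) :
    vecMulVec φ (star φ) * vecMulVec χ (star χ) * vecMulVec φ (star φ) =
      ((‖star φ ⬝ᵥ χ‖ ^ 2 : ℝ) : ℂ) • vecMulVec φ (star φ) := by
  rw [vecMulVec_mul_vecMulVec, vecMulVec_mul_vecMulVec, smul_dotProduct, smul_eq_mul,
    star_dotProduct χ, Complex.star_def, Complex.mul_conj', vecMulVec_smul, Complex.ofReal_pow]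

theorem fidelity_vecMulVec_star [DecidableEq n] {φ : n → ℂ} (hφ : star φ ⬝ᵥ φ = 1)
    (χ : n → ℂ) :
    fidelity (vecMulVec φ (star φ)) (vecMulVec χ (star χ)) = ‖star φ ⬝ᵥ χ‖ := by
  set P := vecMulVec φ (star φ)
  have hP := isStarProjection_vecMulVec_star hφ
  have hPsd : P.PosSemidef := posSemidef_vecMulVec_self_star φ
  have hsqrtP : psqrt P = P := psqrt_eq_of_mul_self hPsd hP.isIdempotentElem.eq
  have hsqrt : psqrt (P * vecMulVec χ (star χ) * P) = ((‖star φ ⬝ᵥ χ‖ : ℝ) : ℂ) • P := by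
    refine psqrt_eq_of_mul_self (hPsd.smul (by positivity)) ?_
    rw [smul_mul_smul, hP.isIdempotentElem.eq, vecMulVec_star_mul_mul_self, ← Complex.ofReal_mul,
      sq]
  rw [fidelity, hsqrtP, hsqrt, trace_smul, trace_vecMulVec, dotProduct_comm φ, hφ]
  simp

end PureStates

section OpNorm

open scoped Matrix.Norms.L2Operator

variable {n : Type*} [Fintype n] [DecidableEq n]

theorem opNorm_eq_l2_opNorm (A : Matrix n n ℂ) : opNorm A = ‖A‖ := rfl

theorem opNorm_smul_sub_vecMulVec_star {e f : n → ℂ} (he : star e ⬝ᵥ e = 1)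
    (hf : star f ⬝ᵥ f = 1) (hef : star e ⬝ᵥ f = 0) (c : ℂ) :
    opNorm (c • (vecMulVec e (star e) - vecMulVec f (star f))) = ‖c‖ := by
  set Pe := vecMulVec e (star e)
  set Pf := vecMulVec f (star f)
  have hPe := isStarProjection_vecMulVec_star he
  have hPf := isStarProjection_vecMulVec_star hf
  have hPePf : Pe * Pf = 0 := by
    rw [vecMulVec_mul_vecMulVec, hef, zero_smul, vecMulVec_zero]
  have hPfPe : Pf * Pe = 0 := by
    rw [vecMulVec_mul_vecMulVec, star_dotProduct, hef, star_zero, zero_smul, vecMulVec_zero]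
  have hsq : (Pe - Pf) * (Pe - Pf) = Pe + Pf := by
    rw [sub_mul, mul_sub, mul_sub, hPe.isIdempotentElem.eq, hPf.isIdempotentElem.eq, hPePf,
      hPfPe]
    abel
  have hne : Pe + Pf ≠ 0 := fun h => by
    simpa [Pe, Pf, trace_vecMulVec, dotProduct_comm e, dotProduct_comm f, he, hf]
      using congrArg trace h
  rw [opNorm_eq_l2_opNorm, norm_smul,
    (hPe.isSelfAdjoint.sub hPf.isSelfAdjoint).norm_eq_one_of_isStarProjection_mul_self
      (hsq ▸ hPe.add hPf hPePf) (hsq ▸ hne), mul_one]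

end OpNorm

section OrthonormalPair

variable {n : Type*} [Fintype n] {e f : n → ℂ}

theorem star_add_smul_dotProduct_add_smul (he : star e ⬝ᵥ e = 1) (hf : star f ⬝ᵥ f = 1)
    (hef : star e ⬝ᵥ f = 0) (a b c d : ℂ) :
    star (a • e + b • f) ⬝ᵥ (c • e + d • f) = star a * c + star b * d := by
  have hfe : star f ⬝ᵥ e = 0 := by rw [star_dotProduct, hef, star_zero]
  simp only [star_add, star_smul, add_dotProduct, dotProduct_add, smul_dotProduct,
    dotProduct_smul, he, hf, hef, hfe, smul_eq_mul]
  ring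

theorem smul_sub_vecMulVec_star_mulVec (he : star e ⬝ᵥ e = 1) (hf : star f ⬝ᵥ f = 1)
    (hef : star e ⬝ᵥ f = 0) (s a b : ℂ) :
    (s • (vecMulVec e (star e) - vecMulVec f (star f))) *ᵥ (a • e + b • f) =
      (s * a) • e + (-(s * b)) • f := by
  have hfe : star f ⬝ᵥ e = 0 := by rw [star_dotProduct, hef, star_zero]
  rw [smul_mulVec, sub_mulVec, vecMulVec_mulVec, vecMulVec_mulVec]
  simp only [dotProduct_add, dotProduct_smul, he, hf, hef, hfe, op_smul_eq_smul, smul_eq_mul,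
    mul_one, mul_zero, add_zero, zero_add, smul_add, smul_neg, smul_smul, neg_smul, sub_eq_add_neg]

end OrthonormalPair

theorem ohira_pearle_saturates_tradeoff_general
    (ℏ : ℝ) (hℏ : 0 < ℏ)
    (e1 em1 : Fin 2 → ℂ)
    (he1 : star e1 ⬝ᵥ e1 = 1) (hem1 : star em1 ⬝ᵥ em1 = 1) (horthb : star e1 ⬝ᵥ em1 = 0)
    (Sz : Matrix (Fin 2) (Fin 2) ℂ)
    (hSz : Sz = ((ℏ : ℂ) / 2) • (vecMulVec e1 (star e1) - vecMulVec em1 (star em1)))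
    (α β : ℂ) (hnorm : ‖α‖ ^ 2 + ‖β‖ ^ 2 = 1)
    (ψ1 ψ0 ψ1' ψ0' : Fin 2 → ℂ)
    (hψ1 : ψ1 = α • e1 + β • em1)
    (hψ0 : ψ0 = (starRingEnd ℂ β) • e1 - (starRingEnd ℂ α) • em1)
    (hψ1' : ψ1' = α • e1 + β • em1)
    (hψ0' : ψ0' = (starRingEnd ℂ β) • e1 + (starRingEnd ℂ α) • em1)
    (a0 a1 : Fin 2 → ℂ)
    (ha0 : a0 = ((1 / Real.sqrt 2 : ℝ) : ℂ) • (e1 + em1))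
    (ha1 : a1 = ((1 / Real.sqrt 2 : ℝ) : ℂ) • (e1 - em1)) :
    star ψ0 ⬝ᵥ (Sz *ᵥ ψ1) = (ℏ : ℂ) * α * β ∧
    fidelity (vecMulVec ψ0' (star ψ0')) (vecMulVec ψ1' (star ψ1'))
      = 2 * ‖α * β‖ ∧
    fidelity (vecMulVec a0 (star a0)) (vecMulVec a1 (star a1)) = 0 ∧
    opNorm Sz = ℏ / 2 ∧
    ‖star ψ0 ⬝ᵥ (Sz *ᵥ ψ1)‖
      = opNorm Sz * fidelity (vecMulVec ψ0' (star ψ0')) (vecMulVec ψ1' (star ψ1')) := by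
  have dot := star_add_smul_dotProduct_add_smul he1 hem1 horthb
  set r : ℂ := ((1 / Real.sqrt 2 : ℝ) : ℂ)
  have hr : star r * r = 1 / 2 := by
    rw [Complex.star_def, Complex.conj_ofReal, ← Complex.ofReal_mul, ← sq, div_pow,
      Real.sq_sqrt zero_le_two]
    norm_num
  have hαβ : star α * α + star β * β = 1 := by
    simp only [Complex.star_def, Complex.conj_mul']
    exact_mod_cast hnorm
  rw [sub_eq_add_neg, ← neg_smul] at hψ0
  rw [smul_add] at ha0
  rw [smul_sub, sub_eq_add_neg, ← neg_smul] at ha1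
  have inner_Sz : star ψ0 ⬝ᵥ (Sz *ᵥ ψ1) = (ℏ : ℂ) * α * β := by
    rw [hSz, hψ1, smul_sub_vecMulVec_star_mulVec he1 hem1 horthb, hψ0, dot]
    simp only [Complex.star_def, Complex.conj_conj, map_neg]
    ring
  have fidelity_ψ : fidelity (vecMulVec ψ0' (star ψ0')) (vecMulVec ψ1' (star ψ1'))
      = 2 * ‖α * β‖ := by
    rw [fidelity_vecMulVec_star (by rw [hψ0', dot]; simpa [mul_comm, add_comm] using hαβ),
      hψ0', hψ1', dot]
    simp only [Complex.star_def, Complex.conj_conj]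
    rw [mul_comm β, ← two_mul, norm_mul, Complex.norm_two]
  have fidelity_a : fidelity (vecMulVec a0 (star a0)) (vecMulVec a1 (star a1)) = 0 := by
    rw [fidelity_vecMulVec_star (by rw [ha0, dot, hr]; norm_num), ha0, ha1, dot]
    simp
  have opNorm_Sz : opNorm Sz = ℏ / 2 := by
    rw [hSz, opNorm_smul_sub_vecMulVec_star he1 hem1 horthb]
    simp [abs_of_pos hℏ]
  refine ⟨inner_Sz, fidelity_ψ, fidelity_a, opNorm_Sz, ?_⟩
  rw [inner_Sz, fidelity_ψ, opNorm_Sz, mul_assoc, norm_mul, Complex.norm_real,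
    Real.norm_of_nonneg hℏ.le]
  ring

/-- The Ohira–Pearle example saturates the distinguishability trade-off. -/
theorem ohira_pearle_saturates_tradeoff
    (ℏ : ℝ) (hℏ : 0 < ℏ)
    (e1 em1 : Fin 2 → ℂ)
    (he1 : star e1 ⬝ᵥ e1 = 1) (hem1 : star em1 ⬝ᵥ em1 = 1) (horthb : star e1 ⬝ᵥ em1 = 0)
    (Sz : Matrix (Fin 2) (Fin 2) ℂ)
    (hSz : Sz = ((ℏ : ℂ) / 2) • (vecMulVec e1 (star e1) - vecMulVec em1 (star em1)))
    (α β : ℂ) (hnorm : ‖α‖ ^ 2 + ‖β‖ ^ 2 = 1)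
    (hα : α ≠ 0) (hβ : β ≠ 0)
    (ψ1 ψ0 ψ1' ψ0' : Fin 2 → ℂ)
    (hψ1 : ψ1 = α • e1 + β • em1)
    (hψ0 : ψ0 = (starRingEnd ℂ β) • e1 - (starRingEnd ℂ α) • em1)
    (hψ1' : ψ1' = α • e1 + β • em1)
    (hψ0' : ψ0' = (starRingEnd ℂ β) • e1 + (starRingEnd ℂ α) • em1)
    (a0 a1 : Fin 2 → ℂ)
    (ha0 : a0 = ((1 / Real.sqrt 2 : ℝ) : ℂ) • (e1 + em1))
    (ha1 : a1 = ((1 / Real.sqrt 2 : ℝ) : ℂ) • (e1 - em1)) :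
    star ψ0 ⬝ᵥ (Sz *ᵥ ψ1) = (ℏ : ℂ) * α * β ∧
    fidelity (vecMulVec ψ0' (star ψ0')) (vecMulVec ψ1' (star ψ1'))
      = 2 * ‖α * β‖ ∧
    fidelity (vecMulVec a0 (star a0)) (vecMulVec a1 (star a1)) = 0 ∧
    opNorm Sz = ℏ / 2 ∧
    ‖star ψ0 ⬝ᵥ (Sz *ᵥ ψ1)‖
      = opNorm Sz * fidelity (vecMulVec ψ0' (star ψ0')) (vecMulVec ψ1' (star ψ1')) :=
  ohira_pearle_saturates_tradeoff_general ℏ hℏ e1 em1 he1 hem1 horthb Sz hSz α β hnorm ψ1 ψ0 ψ1' ψ0'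
    hψ1 hψ0 hψ1' hψ0' a0 a1 ha0 ha1
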